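/- arXiv:1809.04834 — 5 statements merged into one kernel-verified Lean document; each statement's English description precedes it below -/
import Mathlib

section
/- Let X be a conjugacy class of involutions in the semidirect product G̃ = Z ⋊ W, let x = (a, u) and y = (b, v) be elements of X, and let X̂ be the conjugacy class of a in W (so that b ∈ X̂ as well). If x and y are joined by a path in the commuting involution graph C(G̃, X), then a and b are joined by a path in C(W, X̂) and the graph distance satisfies d(a, b) ≤ d(x, y). -/
/-- The semidirect product `Z ⋊ W`, where the group `W` acts on the right on the additive
abelian group `Z` by additive automorphisms (the right action is encoded as a homomorphism
from the multiplicative opposite of `W`).  Elements are pairs `(a, u)` with `a ∈ W`, `u ∈ Z`,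
and multiplication is given by `(a, u) * (b, v) = (a * b, u ^ b + v)`, where `u ^ b` denotes
the action of `b` on `u`. -/
@[ext]
structure SDP {W Z : Type*} [Group W] [AddCommGroup Z] (φ : Wᵐᵒᵖ →* Multiplicative (AddAut Z)) where
  /-- the `W`-component -/
  w : W
  /-- the `Z`-component -/
  z : Z

namespace SDP

variable {W Z : Type*} [Group W] [AddCommGroup Z] {φ : Wᵐᵒᵖ →* Multiplicative (AddAut Z)}

instance : Mul (SDP φ) := ⟨fun x y => ⟨x.w * y.w, Multiplicative.toAdd (φ (MulOpposite.op y.w)) x.z + y.z⟩⟩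
instance : One (SDP φ) := ⟨⟨1, 0⟩⟩
instance : Inv (SDP φ) := ⟨fun x => ⟨x.w⁻¹, -(Multiplicative.toAdd (φ (MulOpposite.op x.w⁻¹)) x.z)⟩⟩

@[simp] theorem mul_w (x y : SDP φ) : (x * y).w = x.w * y.w := rfl
@[simp] theorem mul_z (x y : SDP φ) : (x * y).z = Multiplicative.toAdd (φ (MulOpposite.op y.w)) x.z + y.z := rfl
@[simp] theorem one_w : (1 : SDP φ).w = 1 := rfl
@[simp] theorem one_z : (1 : SDP φ).z = 0 := rfl
@[simp] theorem inv_w (x : SDP φ) : x⁻¹.w = x.w⁻¹ := rfl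
@[simp] theorem inv_z (x : SDP φ) : x⁻¹.z = -(Multiplicative.toAdd (φ (MulOpposite.op x.w⁻¹)) x.z) := rfl

instance : Group (SDP φ) where
  mul_assoc x y z := by
    ext
    · simp [mul_assoc]
    · simp only [mul_z, mul_w, map_add]
      rw [← AddAut.add_apply, ← toAdd_mul, ← map_mul, ← MulOpposite.op_mul, add_assoc]
  one_mul x := by ext <;> simp
  mul_one x := by ext <;> simp
  inv_mul_cancel x := by
    ext
    · simp
    · simp only [mul_z, inv_w, inv_z, mul_w, inv_mul_cancel, one_z, map_neg]
      rw [← AddAut.add_apply, ← toAdd_mul, ← map_mul, ← MulOpposite.op_mul]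
      simp

end SDP

/-- The commuting involution graph on a set `X` of elements of a group `G`: the vertices are
the elements of `X`, and two distinct vertices are adjacent iff they commute in `G`. -/
def commGraph (G : Type*) [Group G] (X : Set G) : SimpleGraph X where
  Adj x y := (x : G) ≠ (y : G) ∧ (x : G) * y = (y : G) * x
  symm := ⟨fun x y h => ⟨h.1.symm, h.2.symm⟩⟩
  loopless := ⟨fun x h => h.1 rfl⟩

/-! The projection `(a, u) ↦ a` is a homomorphism `Z ⋊ W → W`, so it maps the conjugacy class
`X` into `X̂` and commuting elements to commuting elements. Adjacent vertices of `C(G̃, X)`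
therefore go to adjacent or equal vertices of `C(W, X̂)`, and the image of a path is a path that
is at most as long. -/

namespace SDP

variable {W Z : Type*} [Group W] [AddCommGroup Z] {φ : Wᵐᵒᵖ →* Multiplicative (AddAut Z)}

def projW : SDP φ →* W where
  toFun := SDP.w
  map_one' := rfl
  map_mul' _ _ := rfl

end SDP

namespace SimpleGraph

variable {V V' : Type*} {G : SimpleGraph V} {G' : SimpleGraph V'} {f : V → V'}

theorem Walk.exists_length_le_of_adj_or_eq
    (hf : ∀ ⦃u v⦄, G.Adj u v → G'.Adj (f u) (f v) ∨ f u = f v) {u v : V} :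
    ∀ p : G.Walk u v, ∃ q : G'.Walk (f u) (f v), q.length ≤ p.length
  | .nil => ⟨.nil, le_rfl⟩
  | .cons h p => by
    obtain ⟨q, hq⟩ := exists_length_le_of_adj_or_eq hf p
    rcases hf h with hadj | heq
    · exact ⟨.cons hadj q, Nat.succ_le_succ hq⟩
    · exact ⟨q.copy heq.symm rfl, (q.length_copy _ _).trans_le (hq.trans p.length.le_succ)⟩

theorem Reachable.map_of_adj_or_eq
    (hf : ∀ ⦃u v⦄, G.Adj u v → G'.Adj (f u) (f v) ∨ f u = f v) {u v : V}
    (h : G.Reachable u v) : G'.Reachable (f u) (f v) :=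
  let ⟨p⟩ := h
  let ⟨q, _⟩ := p.exists_length_le_of_adj_or_eq hf
  q.reachable

theorem Reachable.dist_map_le_of_adj_or_eq
    (hf : ∀ ⦃u v⦄, G.Adj u v → G'.Adj (f u) (f v) ∨ f u = f v) {u v : V}
    (h : G.Reachable u v) : G'.dist (f u) (f v) ≤ G.dist u v := by
  obtain ⟨p, hp⟩ := h.exists_walk_length_eq_dist
  obtain ⟨q, hq⟩ := p.exists_length_le_of_adj_or_eq hf
  exact (dist_le q).trans (hp ▸ hq)

end SimpleGraph

theorem commGraph.adj_or_eq_of_mapsTo {G H : Type*} [Group G] [Group H] (f : G →* H)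
    {X : Set G} {Y : Set H} (hf : Set.MapsTo f X Y) ⦃x y : X⦄
    (h : (commGraph G X).Adj x y) :
    (commGraph H Y).Adj (hf.restrict f X Y x) (hf.restrict f X Y y) ∨
      hf.restrict f X Y x = hf.restrict f X Y y := by
  by_cases heq : f x = f y
  · exact .inr (Subtype.ext heq)
  · exact .inl ⟨heq, by simp only [Set.MapsTo.val_restrict_apply, ← map_mul, h.2]⟩

theorem stmt0_general {W Z : Type*} [Group W] [AddCommGroup Z] (φ : Wᵐᵒᵖ →* Multiplicative (AddAut Z))
    (x₀ : SDP φ)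
    (X : Set (SDP φ)) (hX : X = {y | IsConj x₀ y})
    (x y : SDP φ) (hx : x ∈ X) (hy : y ∈ X)
    (Xhat : Set W) (hXhat : Xhat = {c | IsConj x.w c})
    (ha : x.w ∈ Xhat) (hb : y.w ∈ Xhat)
    (hreach : (commGraph (SDP φ) X).Reachable ⟨x, hx⟩ ⟨y, hy⟩) :
    (commGraph W Xhat).Reachable ⟨x.w, ha⟩ ⟨y.w, hb⟩ ∧
      (commGraph W Xhat).dist ⟨x.w, ha⟩ ⟨y.w, hb⟩ ≤
        (commGraph (SDP φ) X).dist ⟨x, hx⟩ ⟨y, hy⟩ := by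
  have hmaps : Set.MapsTo SDP.projW X Xhat := by
    subst hX hXhat
    intro g hg
    exact SDP.projW.map_isConj (hx.symm.trans hg)
  have hadj := commGraph.adj_or_eq_of_mapsTo SDP.projW hmaps
  exact ⟨hreach.map_of_adj_or_eq hadj, hreach.dist_map_le_of_adj_or_eq hadj⟩

/-- Let X be a conjugacy class of involutions in the semidirect product
G-tilde = Z ⋊ W, let x = (a, u) and y = (b, v) be elements of X, and let X-hat be the
conjugacy class of a in W (so that b ∈ X-hat as well).  If x and y are joined by a path in
the commuting involution graph C(G-tilde, X), then a and b are joined by a path in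
C(W, X-hat) and the graph distance satisfies d(a, b) ≤ d(x, y). -/
theorem stmt0 {W Z : Type*} [Group W] [AddCommGroup Z] (φ : Wᵐᵒᵖ →* Multiplicative (AddAut Z))
    (x₀ : SDP φ) (hx₀ : orderOf x₀ = 2)
    (X : Set (SDP φ)) (hX : X = {y | IsConj x₀ y})
    (x y : SDP φ) (hx : x ∈ X) (hy : y ∈ X)
    (Xhat : Set W) (hXhat : Xhat = {c | IsConj x.w c})
    (ha : x.w ∈ Xhat) (hb : y.w ∈ Xhat)
    (hreach : (commGraph (SDP φ) X).Reachable ⟨x, hx⟩ ⟨y, hy⟩) :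
    (commGraph W Xhat).Reachable ⟨x.w, ha⟩ ⟨y.w, hb⟩ ∧
      (commGraph W Xhat).dist ⟨x.w, ha⟩ ⟨y.w, hb⟩ ≤
        (commGraph (SDP φ) X).dist ⟨x, hx⟩ ⟨y, hy⟩ :=
  stmt0_general φ x₀ X hX x y hx hy Xhat hXhat ha hb hreach
end

section
/- Let α and β be nonzero vectors in V such that any scalar multiple of α equal to β must be ±α (that is, for all c ∈ ℝ, if β = cα then β = α or β = −α; this holds whenever α, β are roots of a root system). Then the reflections s_α and s_β commute (s_α ∘ s_β = s_β ∘ s_α) if and only if ⟨α, β⟩ = 0, or β = α, or β = −α. -/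
open scoped RealInnerProductSpace

variable {V : Type*} [NormedAddCommGroup V] [InnerProductSpace ℝ V]

/-- The reflection in the hyperplane orthogonal to the (nonzero) vector α:
s_α(v) = v - (2⟪α, v⟫ / ⟪α, α⟫) • α. -/
noncomputable def sRefl (α : V) (v : V) : V :=
  v - ((2 * ⟪α, v⟫ / ⟪α, α⟫) • α)

/-- The coroot of α: α^∨ = (2 / ⟪α, α⟫) • α. -/
noncomputable def coroot (α : V) : V := (2 / ⟪α, α⟫) • α

/-- The affine reflection s_{α,k}(v) = s_α(v) + k • α^∨. -/
noncomputable def sAffRefl (α : V) (k : ℤ) (v : V) : V :=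
  sRefl α v + (k : ℝ) • coroot α

private theorem sRefl_neg (α v : V) : sRefl (-α) v = sRefl α v := by
  simp only [sRefl, inner_neg_left, inner_neg_right, inner_neg_neg]
  module

/-- Let α and β be nonzero vectors in V such that any scalar multiple of α
equal to β must be ±α.  Then the reflections s_α and s_β commute if and only if
⟪α, β⟫ = 0, or β = α, or β = -α. -/
theorem stmt2 (α β : V) (hα : α ≠ 0) (hβ : β ≠ 0)
    (hscal : ∀ c : ℝ, β = c • α → β = α ∨ β = -α) :
    (∀ v : V, sRefl α (sRefl β v) = sRefl β (sRefl α v)) ↔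
      ⟪α, β⟫ = 0 ∨ β = α ∨ β = -α := by
  have hA : ⟪α, α⟫ ≠ 0 := inner_self_ne_zero.mpr hα
  have hB : (⟪β, β⟫ : ℝ) ≠ 0 := inner_self_ne_zero.mpr hβ
  constructor
  · intro h
    by_cases hC : ⟪α, β⟫ = 0
    · exact Or.inl hC
    · refine Or.inr (hscal (⟪β, α⟫ / ⟪α, α⟫) ?_)
      have hC' : ⟪β, α⟫ ≠ 0 := by rwa [real_inner_comm]
      have E := h α
      simp only [sRefl, inner_sub_right, inner_smul_right, real_inner_comm β α] at E
      linear_combination (norm := match_scalars <;> field_simp <;> ring)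
        (-⟪β, β⟫ / (4 * ⟪β, α⟫)) • E
  · rintro (hC | rfl | rfl)
    · intro v
      have hC' : ⟪β, α⟫ = 0 := by rwa [real_inner_comm]
      simp only [sRefl, inner_sub_right, inner_smul_right, hC, hC']
      module
    · intro v; rfl
    · intro v; rw [sRefl_neg, sRefl_neg]
end

section
/- Let α and β be nonzero vectors in V such that any scalar multiple of α equal to β must be α itself (that is, for all c ∈ ℝ, if β = cα then β = α; this holds whenever α, β are positive roots of a root system), and let k, l ∈ ℤ. Then the affine reflections s_{α,k} and s_{β,l} commute (s_{α,k} ∘ s_{β,l} = s_{β,l} ∘ s_{α,k}) if and only if ⟨α, β⟩ = 0, or α = β and k = l. -/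
open scoped RealInnerProductSpace

variable {V : Type*} [NormedAddCommGroup V] [InnerProductSpace ℝ V]

lemma key (α β : V) (hα : α ≠ 0) (hβ : β ≠ 0) (k l : ℤ) (v : V) :
    sAffRefl α k (sAffRefl β l v) - sAffRefl β l (sAffRefl α k v)
      = (4/(⟪α,α⟫*⟪β,β⟫)) • ((⟪α,β⟫*((k:ℝ)-⟪α,v⟫))•β - (⟪α,β⟫*((l:ℝ)-⟪β,v⟫))•α) := by
  have hA : ⟪α,α⟫ ≠ (0:ℝ) := inner_self_ne_zero.mpr hα
  have hB : ⟪β,β⟫ ≠ (0:ℝ) := inner_self_ne_zero.mpr hβ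
  have hc : ⟪β,α⟫ = ⟪α,β⟫ := real_inner_comm α β
  simp only [sAffRefl, sRefl, coroot, inner_add_right, inner_sub_right, inner_smul_right, hc]
  match_scalars <;> field_simp <;> ring

lemma key2 (α β : V) (hα : α ≠ 0) (hβ : β ≠ 0) (k l : ℤ) (v : V) :
    sAffRefl α k (sAffRefl β l v) = sAffRefl β l (sAffRefl α k v) ↔
      (⟪α,β⟫*((k:ℝ)-⟪α,v⟫))•β = (⟪α,β⟫*((l:ℝ)-⟪β,v⟫))•α := by
  have hA : ⟪α,α⟫ ≠ (0:ℝ) := inner_self_ne_zero.mpr hα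
  have hB : ⟪β,β⟫ ≠ (0:ℝ) := inner_self_ne_zero.mpr hβ
  rw [← sub_eq_zero, key α β hα hβ k l v, smul_eq_zero]
  have h4 : (4:ℝ)/(⟪α,α⟫*⟪β,β⟫) ≠ 0 := by positivity
  simp only [h4, false_or, sub_eq_zero]

/-- Let α and β be nonzero vectors in V such that any scalar multiple of α
equal to β must be α itself, and let k, l be integers.  Then the affine reflections
s_{α,k} and s_{β,l} commute if and only if ⟪α, β⟫ = 0, or α = β and k = l. -/
theorem stmt3 (α β : V) (hα : α ≠ 0) (hβ : β ≠ 0)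
    (hscal : ∀ c : ℝ, β = c • α → β = α) (k l : ℤ) :
    (∀ v : V, sAffRefl α k (sAffRefl β l v) = sAffRefl β l (sAffRefl α k v)) ↔
      ⟪α, β⟫ = 0 ∨ (α = β ∧ k = l) := by
  have hA : ⟪α,α⟫ ≠ (0:ℝ) := inner_self_ne_zero.mpr hα
  constructor
  · intro h
    by_cases hP : ⟪α,β⟫ = (0:ℝ)
    · exact Or.inl hP
    right
    have h0 := (key2 α β hα hβ k l 0).mp (h 0)
    have h1 := (key2 α β hα hβ k l α).mp (h α)
    rw [← real_inner_comm β α] at h1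
    simp only [inner_zero_right, sub_zero] at h0
    have hc : ∀ x y : ℝ, (⟪α,β⟫*x)•β = (⟪α,β⟫*y)•α → x•β = y•α := by
      intro x y hxy
      apply smul_right_injective V hP
      simpa only [smul_smul] using hxy
    have h0' : (k:ℝ)•β = (l:ℝ)•α := hc _ _ h0
    have h1' : ((k:ℝ)-⟪α,α⟫)•β = ((l:ℝ)-⟪α,β⟫)•α := hc _ _ h1
    have h2 : ⟪α,α⟫•β = ⟪α,β⟫•α := by
      have h4 := congrArg₂ (fun x y => x - y) h0' h1'
      simp only [sub_smul] at h4
      simpa [sub_sub_cancel] using h4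
    have hβα : β = (⟪α,β⟫/⟪α,α⟫)•α := by
      rw [div_eq_inv_mul, mul_smul, ← h2, smul_smul, inv_mul_cancel₀ hA, one_smul]
    have hβα' : β = α := hscal _ hβα
    refine ⟨hβα'.symm, ?_⟩
    rw [hβα'] at h0'
    have : (k:ℝ) = l := smul_left_injective ℝ hα h0'
    exact_mod_cast this
  · rintro (hP | ⟨rfl, rfl⟩) v
    · rw [key2 α β hα hβ k l v, hP]; simp
    · rw [key2 α α hα hα k k v]
end

section
/- Let I be a set of nonzero vectors of V, and let W_I be the subgroup of the group of linear isometries of V generated by the reflections {s_α : α ∈ I}. If a ∈ W_I and u ∈ V satisfy a(u) + u = 0, then u lies in the linear span of {α : α ∈ I}. -/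
open scoped RealInnerProductSpace

variable {V : Type*} [NormedAddCommGroup V] [InnerProductSpace ℝ V]

/-- Let I be a set of nonzero vectors of V, and let W_I be the subgroup of the
group of linear isometries of V generated by the reflections s_α for α ∈ I.  If a ∈ W_I and
u ∈ V satisfy a(u) + u = 0, then u lies in the linear span of I. -/
theorem stmt6 (I : Set V) (hI : ∀ α ∈ I, α ≠ 0)
    (WI : Subgroup (V ≃ₗᵢ[ℝ] V))
    (hWI : WI = Subgroup.closure {f : V ≃ₗᵢ[ℝ] V | ∃ α ∈ I, ∀ v : V, f v = sRefl α v})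
    (a : V ≃ₗᵢ[ℝ] V) (ha : a ∈ WI) (u : V) (hu : a u + u = 0) :
    u ∈ Submodule.span ℝ I := by
  subst hWI
  have key : ∀ g ∈ Subgroup.closure
      {f : V ≃ₗᵢ[ℝ] V | ∃ α ∈ I, ∀ v : V, f v = sRefl α v},
      ∀ v : V, g v - v ∈ Submodule.span ℝ I := by
    intro g hg
    induction hg using Subgroup.closure_induction with
    | mem f hf =>
      obtain ⟨α, hα, hfα⟩ := hf
      intro v
      rw [hfα v, sRefl]
      have : v - (2 * ⟪α, v⟫ / ⟪α, α⟫) • α - v = (-(2 * ⟪α, v⟫ / ⟪α, α⟫)) • α := by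
        module
      rw [this]
      exact Submodule.smul_mem _ _ (Submodule.subset_span hα)
    | one => intro v; simp
    | mul x y _ _ hx hy =>
      intro v
      have : (x * y) v - v = (x (y v) - y v) + (y v - v) := by
        simp [LinearIsometryEquiv.coe_mul]
      rw [this]
      exact Submodule.add_mem _ (hx _) (hy _)
    | inv x _ hx =>
      intro v
      have h := hx (x⁻¹ v)
      rw [show x (x⁻¹ v) = v from x.apply_symm_apply v] at h
      have : x⁻¹ v - v = -(v - x⁻¹ v) := by abel
      rw [this]
      exact Submodule.neg_mem _ h
  have h2 : a u - u ∈ Submodule.span ℝ I := key a ha u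
  have hau : a u = -u := by linear_combination (norm := abel) hu
  rw [hau] at h2
  have : u = (-(1/2) : ℝ) • (-u - u) := by module
  rw [this]
  exact Submodule.smul_mem _ _ h2
end

section
/- Let W̃ be the Coxeter group of type G̃₂ and let x ∈ W̃ be any involution, with X the conjugacy class of x in W̃. Then the commuting involution graph C(W̃, X) is not connected. -/
/-!
`W̃` acts faithfully on `ℤ²` by affine maps (`AffineG2.rep`). Faithfulness comes from a normal
form: with `r = s₀s₁`, every element is `t₁ᵃ t₂ᵇ rᵏ s₀ᵉ` with `k < 6`, `e < 2`, where the
translations `t₁`, `t₂` act as the unit vectors and the twelve elements `rᵏ s₀ᵉ` have distinct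
linear parts. If two conjugate involutions commute, their linear parts are commuting conjugate
involutions of the dihedral group of order 12, hence equal (a finite check), and then their
translation parts agree as well. So the commuting involution graph on a conjugacy class of
involutions has no edges; it has two vertices `x ≠ g x g⁻¹` because `W̃` has trivial centre.
-/


/-- The Coxeter matrix of affine type G̃₂, on generator indices 0, 1, 2 (corresponding to
r₁, r₂, r₃): m(i,i) = 1, m(0,1) = 6, m(1,2) = 3, m(0,2) = 2. -/
def G2AffMatrix : CoxeterMatrix (Fin 3) where
  M := Matrix.of fun i j : Fin 3 =>
    if i = j then 1
    else if (i = 0 ∧ j = 1) ∨ (i = 1 ∧ j = 0) then 6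
    else if (i = 1 ∧ j = 2) ∨ (i = 2 ∧ j = 1) then 3
    else 2
  isSymm := by decide
  diagonal := by decide
  off_diagonal := by
    intro i i' h
    fin_cases i <;> fin_cases i' <;> simp_all [Matrix.of_apply]

/-- The affine Coxeter group of type G̃₂. -/
abbrev G2Aff : Type _ := G2AffMatrix.Group

lemma exists_lt_zpow_eq_pow {G : Type*} [Group G] {x : G} {n : ℕ} (hn : 0 < n) (hx : x ^ n = 1)
    (m : ℤ) : ∃ k < n, x ^ m = x ^ k := by
  have h₀ : 0 ≤ m % n := Int.emod_nonneg m (by omega)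
  have h₁ : m % n < n := Int.emod_lt_of_pos m (by omega)
  refine ⟨(m % n).toNat, by omega, ?_⟩
  rw [zpow_eq_zpow_emod' m hx, ← zpow_natCast, Int.toNat_of_nonneg h₀]

theorem not_connected_commGraph_conjClass {G : Type*} [Group G] {x : G}
    (hx : x ∉ Subgroup.center G) (h : ∀ y z, IsConj x y → IsConj x z → Commute y z → y = z) :
    ¬ (commGraph G {y | IsConj x y}).Connected := by
  obtain ⟨g, hg⟩ : ∃ g, g * x ≠ x * g := by simpa [Subgroup.mem_center_iff] using hx
  have hbot : commGraph G {y | IsConj x y} = ⊥ := by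
    ext y z
    simp only [SimpleGraph.bot_adj, iff_false]
    exact fun hyz => hyz.1 (h _ _ y.2 z.2 hyz.2)
  have : Nontrivial {y | IsConj x y} :=
    nontrivial_of_ne ⟨x, IsConj.refl x⟩ ⟨g * x * g⁻¹, isConj_iff.mpr ⟨g, rfl⟩⟩ fun hx' =>
      hg (mul_inv_eq_iff_eq_mul.mp (Subtype.mk.inj hx').symm)
  rw [hbot]
  exact SimpleGraph.not_connected_bot

namespace AffineG2

open scoped Matrix

local notation "M₂" => Matrix (Fin 2) (Fin 2) ℤ
local notation "M₃" => Matrix (Fin 3) (Fin 3) ℤ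

def affMat (p : M₂) (v : Fin 2 → ℤ) : M₃ :=
  !![p 0 0, p 0 1, v 0; p 1 0, p 1 1, v 1; 0, 0, 1]

lemma affMat_mul (p q : M₂) (u v : Fin 2 → ℤ) :
    affMat p u * affMat q v = affMat (p * q) (p *ᵥ v + u) := by
  ext i j
  fin_cases i <;> fin_cases j <;>
    simp [affMat, Matrix.mul_apply, Fin.sum_univ_three, Fin.sum_univ_two]

lemma affMat_one : affMat 1 0 = 1 := by decide

lemma affMat_inj {p q : M₂} {u v : Fin 2 → ℤ} : affMat p u = affMat q v ↔ p = q ∧ u = v := by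
  refine ⟨fun h => ⟨?_, ?_⟩, fun h => h.1 ▸ h.2 ▸ rfl⟩
  · ext i j
    fin_cases i <;> fin_cases j
    exacts [congrFun₂ h 0 0, congrFun₂ h 0 1, congrFun₂ h 1 0, congrFun₂ h 1 1]
  · ext i
    fin_cases i
    exacts [congrFun₂ h 0 2, congrFun₂ h 1 2]

lemma affMat_zero_pow (p : M₂) : ∀ n : ℕ, affMat p 0 ^ n = affMat (p ^ n) 0
  | 0 => by rw [pow_zero, pow_zero, affMat_one]
  | n + 1 => by
    rw [pow_succ, pow_succ, affMat_zero_pow p n, affMat_mul, Matrix.mulVec_zero, add_zero]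

lemma commute_affMat_iff {p q : M₂} {u v : Fin 2 → ℤ} :
    Commute (affMat p u) (affMat q v) ↔ p * q = q * p ∧ p *ᵥ v + u = q *ᵥ u + v := by
  rw [Commute, SemiconjBy, affMat_mul, affMat_mul, affMat_inj]

def affTransl : Multiplicative (Fin 2 → ℤ) →* GL (Fin 3) ℤ where
  toFun v :=
    ⟨affMat 1 v.toAdd, affMat 1 (-v.toAdd), by simp [affMat_mul, affMat_one],
      by simp [affMat_mul, affMat_one]⟩
  map_one' := Units.ext affMat_one
  map_mul' u v := Units.ext <| by simp [affMat_mul, add_comm]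

abbrev cs : CoxeterSystem G2AffMatrix G2Aff := G2AffMatrix.toCoxeterSystem

local notation "s" => cs.simple
local notation "π" => cs.wordProd

def A₀ : M₂ := !![1, 1; 0, -1]
def A₁ : M₂ := !![1, 0; -1, -1]

/- `s₀`, `s₁` act linearly and `s₂` is the affine reflection `x ↦ e₁ - A₀ x`. The coordinates
are chosen so that the translations `t₁`, `t₂` below act by the unit vectors. -/
def genMat : Fin 3 → M₃ := ![affMat A₀ 0, affMat A₁ 0, affMat (-A₀) ![1, 0]]

lemma genMat_mul_self (i : Fin 3) : genMat i * genMat i = 1 := by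
  fin_cases i <;> decide

def gen (i : Fin 3) : GL (Fin 3) ℤ := ⟨genMat i, genMat i, genMat_mul_self i, genMat_mul_self i⟩

lemma isLiftable_gen : G2AffMatrix.IsLiftable gen := by
  intro i j
  ext : 1
  rw [Units.val_pow_eq_pow_val, Units.val_mul]
  fin_cases i <;> fin_cases j <;> decide

def rep : G2Aff →* GL (Fin 3) ℤ := cs.lift ⟨gen, isLiftable_gen⟩

lemma rep_simple (i : Fin 3) : (rep (s i) : M₃) = genMat i :=
  congrArg Units.val (cs.lift_apply_simple isLiftable_gen i)

lemma rep_wordProd (l : List (Fin 3)) : (rep (π l) : M₃) = (l.map genMat).prod := by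
  induction l with
  | nil => simp
  | cons i l ih =>
    rw [cs.wordProd_cons, map_mul, Units.val_mul, rep_simple, ih, List.map_cons, List.prod_cons]

lemma wordProd_congr {x y : List (Fin 3)} (h : π x = π y) (a b : List (Fin 3)) :
    π (a ++ x ++ b) = π (a ++ y ++ b) := by
  simp only [cs.wordProd_append, h]

lemma wordProd_cancel (i : Fin 3) (a b : List (Fin 3)) : π (a ++ [i, i] ++ b) = π (a ++ b) := by
  simp only [cs.wordProd_append, cs.wordProd_cons, cs.wordProd_nil, mul_one,
    cs.simple_mul_simple_self]

lemma wordProd_braid₀₁ : π [0, 1, 0, 1, 0, 1] = π [1, 0, 1, 0, 1, 0] :=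
  cs.wordProd_braidWord_eq 0 1

lemma wordProd_braid₁₂ : π [1, 2, 1] = π [2, 1, 2] := cs.wordProd_braidWord_eq 2 1

lemma wordProd_braid₀₂ : π [0, 2] = π [2, 0] := cs.wordProd_braidWord_eq 0 2

lemma simple_mul_wordProd_mul_inv (i : Fin 3) (w : List (Fin 3)) :
    s i * π w * (s i)⁻¹ = π ([i] ++ w ++ [i]) := by
  simp only [cs.wordProd_append, cs.wordProd_singleton, cs.inv_simple]

-- `t₁ = s₂ · (s₁s₀s₁s₀s₁)` is a product of two reflections in parallel walls.
def t₁ : G2Aff := π [2, 1, 0, 1, 0, 1]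
def t₂ : G2Aff := π [0, 1, 2, 1, 0, 1]

lemma t₁_mul_t₂_inv : t₁ * t₂⁻¹ = π [2, 1, 0, 1, 0, 1, 1, 0, 1, 2, 1, 0] := by
  rw [t₁, t₂, ← cs.wordProd_reverse, ← cs.wordProd_append]
  rfl

lemma commute_t₁_t₂ : Commute t₁ t₂ := by
  rw [Commute, SemiconjBy, t₁, t₂, ← cs.wordProd_append, ← cs.wordProd_append]
  calc π [2, 1, 0, 1, 0, 1, 0, 1, 2, 1, 0, 1]
    _ = π [2, 1, 1, 0, 1, 0, 1, 0, 2, 1, 0, 1] :=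
      wordProd_congr wordProd_braid₀₁ [2, 1] [2, 1, 0, 1]
    _ = π [2, 0, 1, 0, 1, 0, 2, 1, 0, 1] := wordProd_cancel 1 [2] [0, 1, 0, 1, 0, 2, 1, 0, 1]
    _ = π [2, 0, 1, 2, 2, 0, 1, 0, 2, 1, 0, 1] :=
      (wordProd_cancel 2 [2, 0, 1] [0, 1, 0, 2, 1, 0, 1]).symm
    _ = π [2, 0, 1, 2, 2, 0, 1, 2, 0, 1, 0, 1] :=
      wordProd_congr wordProd_braid₀₂ [2, 0, 1, 2, 2, 0, 1] [1, 0, 1]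
    _ = π [2, 0, 1, 2, 0, 2, 1, 2, 0, 1, 0, 1] :=
      (wordProd_congr wordProd_braid₀₂ [2, 0, 1, 2] [1, 2, 0, 1, 0, 1]).symm
    _ = π [0, 2, 1, 2, 0, 2, 1, 2, 0, 1, 0, 1] :=
      (wordProd_congr wordProd_braid₀₂ [] [1, 2, 0, 2, 1, 2, 0, 1, 0, 1]).symm
    _ = π [0, 2, 1, 2, 0, 1, 2, 1, 0, 1, 0, 1] :=
      (wordProd_congr wordProd_braid₁₂ [0, 2, 1, 2, 0] [0, 1, 0, 1]).symm
    _ = π [0, 1, 2, 1, 0, 1, 2, 1, 0, 1, 0, 1] :=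
      (wordProd_congr wordProd_braid₁₂ [0] [0, 1, 2, 1, 0, 1, 0, 1]).symm

lemma simple_zero_conj_t₁ : s 0 * t₁ * (s 0)⁻¹ = t₁ := by
  rw [t₁, simple_mul_wordProd_mul_inv]
  calc π [0, 2, 1, 0, 1, 0, 1, 0]
    _ = π [0, 2, 0, 1, 0, 1, 0, 1] := (wordProd_congr wordProd_braid₀₁ [0, 2] []).symm
    _ = π [0, 0, 2, 1, 0, 1, 0, 1] := (wordProd_congr wordProd_braid₀₂ [0] [1, 0, 1, 0, 1]).symm
    _ = π [2, 1, 0, 1, 0, 1] := wordProd_cancel 0 [] [2, 1, 0, 1, 0, 1]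

lemma simple_zero_conj_t₂ : s 0 * t₂ * (s 0)⁻¹ = t₁ * t₂⁻¹ := by
  rw [t₁_mul_t₂_inv, t₂, simple_mul_wordProd_mul_inv]
  calc π [0, 0, 1, 2, 1, 0, 1, 0]
    _ = π [1, 2, 1, 0, 1, 0] := wordProd_cancel 0 [] [1, 2, 1, 0, 1, 0]
    _ = π [2, 1, 2, 0, 1, 0] := wordProd_congr wordProd_braid₁₂ [] [0, 1, 0]
    _ = π [2, 1, 0, 2, 1, 0] := (wordProd_congr wordProd_braid₀₂ [2, 1] [1, 0]).symm
    _ = π [2, 1, 0, 1, 1, 2, 1, 0] := (wordProd_cancel 1 [2, 1, 0] [2, 1, 0]).symm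
    _ = π [2, 1, 0, 1, 0, 0, 1, 2, 1, 0] := (wordProd_cancel 0 [2, 1, 0, 1] [1, 2, 1, 0]).symm
    _ = π [2, 1, 0, 1, 0, 1, 1, 0, 1, 2, 1, 0] :=
      (wordProd_cancel 1 [2, 1, 0, 1, 0] [0, 1, 2, 1, 0]).symm

lemma simple_one_conj_t₁ : s 1 * t₁ * (s 1)⁻¹ = t₁ * t₂⁻¹ := by
  rw [t₁_mul_t₂_inv, t₁, simple_mul_wordProd_mul_inv]
  calc π [1, 2, 1, 0, 1, 0, 1, 1]
    _ = π [1, 2, 1, 0, 1, 0] := wordProd_cancel 1 [1, 2, 1, 0, 1, 0] []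
    _ = π [2, 1, 2, 0, 1, 0] := wordProd_congr wordProd_braid₁₂ [] [0, 1, 0]
    _ = π [2, 1, 0, 2, 1, 0] := (wordProd_congr wordProd_braid₀₂ [2, 1] [1, 0]).symm
    _ = π [2, 1, 0, 1, 1, 2, 1, 0] := (wordProd_cancel 1 [2, 1, 0] [2, 1, 0]).symm
    _ = π [2, 1, 0, 1, 0, 0, 1, 2, 1, 0] := (wordProd_cancel 0 [2, 1, 0, 1] [1, 2, 1, 0]).symm
    _ = π [2, 1, 0, 1, 0, 1, 1, 0, 1, 2, 1, 0] :=
      (wordProd_cancel 1 [2, 1, 0, 1, 0] [0, 1, 2, 1, 0]).symm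

lemma simple_one_conj_t₂ : s 1 * t₂ * (s 1)⁻¹ = t₂⁻¹ := by
  rw [t₂, simple_mul_wordProd_mul_inv, ← cs.wordProd_reverse]
  exact wordProd_cancel 1 [1, 0, 1, 2, 1, 0] []

lemma rep_t₁ : (rep t₁ : M₃) = affMat 1 ![1, 0] := by
  rw [t₁, rep_wordProd]
  decide

lemma rep_t₂ : (rep t₂ : M₃) = affMat 1 ![0, 1] := by
  rw [t₂, rep_wordProd]
  decide

def transl (v : Fin 2 → ℤ) : G2Aff := t₁ ^ v 0 * t₂ ^ v 1

@[simp] lemma transl_zero : transl 0 = 1 := by simp [transl]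

lemma transl_add (u v : Fin 2 → ℤ) : transl (u + v) = transl u * transl v := by
  simp only [transl, Pi.add_apply, _root_.zpow_add, mul_assoc,
    (commute_t₁_t₂.zpow_zpow (v 0) (u 1)).left_comm]

lemma transl_zsmul (n : ℤ) (v : Fin 2 → ℤ) : transl (n • v) = transl v ^ n := by
  simp only [transl, Pi.smul_apply, smul_eq_mul, (commute_t₁_t₂.zpow_zpow _ _).mul_zpow,
    ← _root_.zpow_mul, mul_comm n]

lemma rep_transl (v : Fin 2 → ℤ) : (rep (transl v) : M₃) = affMat 1 v := by
  have h₁ : rep t₁ = affTransl (.ofAdd ![1, 0]) := Units.ext rep_t₁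
  have h₂ : rep t₂ = affTransl (.ofAdd ![0, 1]) := Units.ext rep_t₂
  have hv : v = v 0 • ![1, 0] + v 1 • ![0, 1] := by
    ext i
    fin_cases i <;> simp
  rw [transl, map_mul, map_zpow, map_zpow, h₁, h₂, ← map_zpow affTransl, ← map_zpow affTransl,
    ← map_mul affTransl, ← ofAdd_zsmul, ← ofAdd_zsmul, ← ofAdd_add, ← hv]
  rfl

def ActsOnTransl (g : G2Aff) (A : M₂) : Prop :=
  ∀ v, g * transl v * g⁻¹ = transl (A *ᵥ v)

lemma ActsOnTransl.mul {g h : G2Aff} {A B : M₂} (hg : ActsOnTransl g A)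
    (hh : ActsOnTransl h B) : ActsOnTransl (g * h) (A * B) := by
  intro v
  rw [← Matrix.mulVec_mulVec, ← hg, ← hh]
  group

lemma ActsOnTransl.pow {g : G2Aff} {A : M₂} (hg : ActsOnTransl g A) :
    ∀ n : ℕ, ActsOnTransl (g ^ n) (A ^ n)
  | 0 => fun v => by simp
  | n + 1 => by
    rw [pow_succ, pow_succ]
    exact (hg.pow n).mul hg

lemma actsOnTransl_of_basis {g : G2Aff} {A : M₂}
    (h₁ : g * t₁ * g⁻¹ = transl fun i => A i 0) (h₂ : g * t₂ * g⁻¹ = transl fun i => A i 1) :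
    ActsOnTransl g A := by
  intro v
  have hv : A *ᵥ v = v 0 • (fun i => A i 0) + v 1 • (fun i => A i 1) := by
    ext i
    simp [Matrix.mulVec, dotProduct, Fin.sum_univ_two, mul_comm]
  rw [hv, transl_add, transl_zsmul, transl_zsmul, ← h₁, ← h₂, conj_zpow, conj_zpow, transl]
  group

lemma actsOnTransl_t₁ : ActsOnTransl t₁ 1 :=
  actsOnTransl_of_basis (by simp [transl]) (by simp [transl, commute_t₁_t₂.eq])

lemma actsOnTransl_simple_zero : ActsOnTransl (s 0) A₀ :=
  actsOnTransl_of_basis (by rw [simple_zero_conj_t₁]; simp [transl, A₀])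
    (by rw [simple_zero_conj_t₂]; simp [transl, A₀])

lemma actsOnTransl_simple_one : ActsOnTransl (s 1) A₁ :=
  actsOnTransl_of_basis (by rw [simple_one_conj_t₁]; simp [transl, A₁])
    (by rw [simple_one_conj_t₂]; simp [transl, A₁])

def r : G2Aff := s 0 * s 1

lemma r_pow_six : r ^ 6 = 1 := cs.simple_mul_simple_pow 0 1

lemma simple_zero_mul_zpow_r (k : ℤ) : s 0 * r ^ k = r ^ (-k) * s 0 := by
  have h : s 0 * r * (s 0)⁻¹ = r⁻¹ := by
    simp only [r, _root_.mul_inv_rev, cs.inv_simple, ← mul_assoc, cs.simple_mul_simple_self,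
      one_mul]
  rw [_root_.zpow_neg, ← inv_zpow, ← h, conj_zpow]
  group

lemma simple_one_eq : s 1 = s 0 * r := (cs.simple_mul_simple_cancel_left 0).symm

lemma simple_two_eq : s 2 = t₁ * (s 0 * r ^ 3) := by
  have h : s 0 * r ^ 3 = s 1 * s 0 * s 1 * s 0 * s 1 := by
    simp only [r, pow_succ, pow_zero, one_mul, ← mul_assoc, cs.simple_mul_simple_self]
  rw [h, t₁]
  simp only [cs.wordProd_cons, cs.wordProd_nil, mul_one, mul_assoc,
    cs.simple_mul_simple_cancel_left, cs.simple_mul_simple_self]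

def simpleLinPart : Fin 3 → M₂ := ![A₀, A₁, -A₀]

lemma actsOnTransl_simple : ∀ i, ActsOnTransl (s i) (simpleLinPart i)
  | 0 => actsOnTransl_simple_zero
  | 1 => actsOnTransl_simple_one
  | 2 => by
    have h := actsOnTransl_t₁.mul (actsOnTransl_simple_zero.mul
      ((actsOnTransl_simple_zero.mul actsOnTransl_simple_one).pow 3))
    rwa [← r, ← simple_two_eq, show (1 : M₂) * (A₀ * (A₀ * A₁) ^ 3) = -A₀ by decide] at h

lemma simple_mul_zpow_r (k : ℤ) : ∀ i, ∃ u, ∃ k' : ℤ, s i * r ^ k = transl u * r ^ k' * s 0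
  | 0 => ⟨0, -k, by rw [transl_zero, one_mul, simple_zero_mul_zpow_r]⟩
  | 1 => ⟨0, -(1 + k), by
      rw [transl_zero, one_mul, simple_one_eq, mul_assoc, ← zpow_one_add, simple_zero_mul_zpow_r]⟩
  | 2 => by
    refine ⟨![1, 0], -(3 + k), ?_⟩
    rw [simple_two_eq, mul_assoc, mul_assoc, ← zpow_natCast, ← _root_.zpow_add,
      simple_zero_mul_zpow_r]
    simp [transl, mul_assoc]

lemma exists_transl_mul_zpow (g : G2Aff) :
    ∃ (v : Fin 2 → ℤ) (k e : ℤ), g = transl v * r ^ k * s 0 ^ e := by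
  induction g using cs.simple_induction_left with
  | one => exact ⟨0, 0, 0, by simp⟩
  | mul_simple_left g i ih =>
    obtain ⟨v, k, e, rfl⟩ := ih
    obtain ⟨u, k', hk'⟩ := simple_mul_zpow_r k i
    refine ⟨simpleLinPart i *ᵥ v + u, k', 1 + e, ?_⟩
    calc s i * (transl v * r ^ k * s 0 ^ e)
        = s i * transl v * (s i)⁻¹ * (s i * r ^ k) * s 0 ^ e := by group
      _ = transl (simpleLinPart i *ᵥ v + u) * r ^ k' * s 0 ^ (1 + e) := by
        rw [hk', actsOnTransl_simple, transl_add, zpow_one_add]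
        group

lemma exists_transl_mul_pow (g : G2Aff) :
    ∃ v, ∃ k < 6, ∃ e < 2, g = transl v * r ^ k * s 0 ^ e := by
  obtain ⟨v, k, e, rfl⟩ := exists_transl_mul_zpow g
  obtain ⟨k', hk', hk⟩ := exists_lt_zpow_eq_pow (by norm_num) r_pow_six k
  obtain ⟨e', he', he⟩ := exists_lt_zpow_eq_pow (by norm_num) (cs.simple_sq 0) e
  exact ⟨v, k', hk', e', he', by rw [hk, he]⟩

lemma rep_transl_mul_pow (v : Fin 2 → ℤ) (k e : ℕ) :
    (rep (transl v * r ^ k * s 0 ^ e) : M₃) = affMat ((A₀ * A₁) ^ k * A₀ ^ e) v := by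
  have hr : (rep r : M₃) = affMat (A₀ * A₁) 0 := by
    rw [r, map_mul, Units.val_mul, rep_simple, rep_simple]
    simp [genMat, affMat_mul]
  rw [map_mul, map_mul, map_pow, map_pow, Units.val_mul, Units.val_mul, Units.val_pow_eq_pow_val,
    Units.val_pow_eq_pow_val, rep_transl, hr, rep_simple, genMat, Matrix.cons_val_zero,
    affMat_zero_pow, affMat_zero_pow, affMat_mul, affMat_mul]
  simp

def W₀ : List M₂ :=
  (List.range 6).flatMap fun k => (List.range 2).map fun e => (A₀ * A₁) ^ k * A₀ ^ e

lemma eq_zero_of_pow_mul_pow_eq_one :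
    ∀ k < 6, ∀ e < 2, (A₀ * A₁) ^ k * A₀ ^ e = 1 → k = 0 ∧ e = 0 := by
  decide

lemma W₀_eq_of_commute_of_conj : ∀ p ∈ W₀, ∀ q ∈ W₀, ∀ w ∈ W₀,
    p * p = 1 → p * q = q * p → q * w = w * p → p ≠ 1 → p = q := by
  decide

lemma rep_injective : Function.Injective rep := by
  refine (injective_iff_map_eq_one rep).mpr fun g hg => ?_
  obtain ⟨v, k, hk, e, he, rfl⟩ := exists_transl_mul_pow g
  have h := congrArg Units.val hg
  rw [rep_transl_mul_pow, Units.val_one, ← affMat_one, affMat_inj] at h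
  obtain ⟨rfl, rfl⟩ := eq_zero_of_pow_mul_pow_eq_one k hk e he h.1
  simp [h.2]

lemma exists_rep_eq_affMat (g : G2Aff) : ∃ p ∈ W₀, ∃ v, (rep g : M₃) = affMat p v := by
  obtain ⟨v, k, hk, e, he, rfl⟩ := exists_transl_mul_pow g
  exact ⟨_, List.mem_flatMap.mpr ⟨k, List.mem_range.mpr hk, List.mem_map.mpr
    ⟨e, List.mem_range.mpr he, rfl⟩⟩, v, rep_transl_mul_pow v k e⟩

theorem center_eq_bot : Subgroup.center G2Aff = ⊥ := by
  refine (Subgroup.eq_bot_iff_forall _).mpr fun x hx => rep_injective ?_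
  have hcomm (g : G2Aff) : Commute (rep g : M₃) (rep x) :=
    ((show Commute g x from Subgroup.mem_center_iff.mp hx g).map rep).units_val
  obtain ⟨p, -, u, hpu⟩ := exists_rep_eq_affMat x
  have hp : p = 1 := by
    refine Matrix.ext_iff_mulVec.mpr fun v => ?_
    have h := hcomm (transl v)
    rw [rep_transl, hpu, commute_affMat_iff, Matrix.one_mulVec, add_comm] at h
    exact (add_right_cancel h.2).symm.trans (Matrix.one_mulVec v).symm
  have h₀ := hcomm (s 0)
  have h₁ := hcomm (s 1)
  simp only [rep_simple, genMat, Matrix.cons_val_zero, Matrix.cons_val_one, hpu, hp,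
    commute_affMat_iff] at h₀ h₁
  have hu : u = 0 := by
    have e₀ := congrFun h₀.2 1
    have e₁ := congrFun h₁.2 1
    simp [A₀, A₁, dotProduct, Fin.sum_univ_two] at e₀ e₁
    ext i
    fin_cases i <;> simp <;> omega
  rw [map_one]
  exact Units.ext (by rw [hpu, hp, hu, affMat_one, Units.val_one])

lemma linPart_of_orderOf_eq_two {g : G2Aff} {p : M₂} {u : Fin 2 → ℤ} (hg : orderOf g = 2)
    (h : (rep g : M₃) = affMat p u) : p * p = 1 ∧ p *ᵥ u = -u ∧ p ≠ 1 := by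
  obtain ⟨hg2, hg1⟩ := orderOf_eq_prime_iff.mp hg
  have hsq : affMat p u * affMat p u = affMat 1 0 := by
    rw [← h, ← Units.val_mul, ← map_mul, ← sq, hg2, map_one, Units.val_one, affMat_one]
  rw [affMat_mul, affMat_inj, add_eq_zero_iff_eq_neg] at hsq
  refine ⟨hsq.1, hsq.2, ?_⟩
  rintro rfl
  have hu : u = 0 := self_eq_neg.mp (by rw [Matrix.one_mulVec] at hsq; exact hsq.2)
  exact hg1 (rep_injective (Units.ext (by rw [h, hu, affMat_one, map_one, Units.val_one])))

theorem eq_of_isConj_of_commute {a b : G2Aff} (hab : IsConj a b) (ha : orderOf a = 2)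
    (hcomm : Commute a b) : a = b := by
  obtain ⟨c, hc⟩ := hab
  have hb : orderOf b = 2 := (SemiconjBy.orderOf_eq _ hc).symm.trans ha
  obtain ⟨p, hp, u, hu⟩ := exists_rep_eq_affMat a
  obtain ⟨q, hq, v, hv⟩ := exists_rep_eq_affMat b
  obtain ⟨w, hw, _, hw'⟩ := exists_rep_eq_affMat c
  obtain ⟨hp2, hpu, hp1⟩ := linPart_of_orderOf_eq_two ha hu
  obtain ⟨-, hqv, -⟩ := linPart_of_orderOf_eq_two hb hv
  have hpq := commute_affMat_iff.mp (hu ▸ hv ▸ (hcomm.map rep).units_val)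
  have hqw : q * w = w * p := by
    have h := congrArg (fun g => (rep g : M₃)) hc.eq
    simp only [map_mul, Units.val_mul, hu, hv, hw', affMat_mul, affMat_inj] at h
    exact h.1.symm
  obtain rfl := W₀_eq_of_commute_of_conj p hp q hq w hw hp2 hpq.1 hqw hp1
  have huv : u = v := by
    rw [hpu, hqv] at hpq
    refine sub_eq_zero.mp (self_eq_neg.mp ?_)
    calc u - v = -v + u := by abel
      _ = -u + v := hpq.2
      _ = -(u - v) := by abel
  exact rep_injective (Units.ext (by rw [hu, hv, huv]))

end AffineG2

/-- Let W̃ be the Coxeter group of type G̃₂ and let x ∈ W̃ be any involution,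
with X the conjugacy class of x in W̃.  Then the commuting involution graph C(W̃, X) is not
connected. -/
theorem stmt13 (x : G2Aff) (hx : orderOf x = 2)
    (X : Set G2Aff) (hX : X = {y | IsConj x y}) :
    ¬ (commGraph G2Aff X).Connected := by
  subst hX
  refine not_connected_commGraph_conjClass ?_ fun y z hy hz hyz =>
    AffineG2.eq_of_isConj_of_commute (hy.symm.trans hz) ?_ hyz
  · rw [AffineG2.center_eq_bot, Subgroup.mem_bot]
    exact (orderOf_eq_prime_iff.mp hx).2
  · obtain ⟨c, hc⟩ := hy
    exact (SemiconjBy.orderOf_eq _ hc).symm.trans hx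
end
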